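/- Let p ≥ 1 be an integer, and for even k set α_k = 2p+2 and φ_k = ∑_{j=−p}^{p} δ^k_{p,j} · j^{2p+2}. Then for every real number c: ∑_{k=1}^{p} φ_{2k} · c^{2k} / (2k)! = ∑_{j=−p}^{p} F_{p,j}(c) · j^{2p+2}; i.e., this sum equals r(c), where r is the polynomial of degree ≤ 2p interpolating the points (j, j^{2p+2}) for j = −p, …, p. -/

import Mathlib

/-- Lagrange basis polynomial `F_{p,j}` on nodes `-p, …, p`. -/
noncomputable def Fpoly (p : ℕ) (j : ℤ) (x : ℝ) : ℝ :=
  ∏ r ∈ (Finset.Icc (-(p:ℤ)) (p:ℤ)).erase j, (x - (r:ℝ)) / ((j:ℝ) - (r:ℝ))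

/-- `δ^k_{p,j} = F_{p,j}^{(k)}(0)`. -/
noncomputable def delta (p k : ℕ) (j : ℤ) : ℝ := iteratedDeriv k (Fpoly p j) 0
open Polynomial Finset

noncomputable def Ppoly (p : ℕ) (j : ℤ) : ℝ[X] :=
  ∏ r ∈ (Finset.Icc (-(p:ℤ)) (p:ℤ)).erase j,
    Polynomial.C (((j:ℝ) - (r:ℝ))⁻¹) * (Polynomial.X - Polynomial.C (r:ℝ))

lemma Ppoly_eval (p : ℕ) (j : ℤ) (x : ℝ) : (Ppoly p j).eval x = Fpoly p j x := by
  simp only [Ppoly, Fpoly, eval_prod, eval_mul, eval_C, eval_sub, eval_X]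
  exact Finset.prod_congr rfl fun r _ => by rw [div_eq_mul_inv, mul_comm]

lemma iteratedDeriv_polyeval (Q : ℝ[X]) (k : ℕ) :
    iteratedDeriv k (fun y => Q.eval y) = fun x => (Polynomial.derivative^[k] Q).eval x := by
  induction k with
  | zero => simp
  | succ k ih =>
    rw [iteratedDeriv_succ, ih, Function.iterate_succ_apply']
    funext x
    exact Polynomial.deriv _

lemma delta_eq (p k : ℕ) (j : ℤ) :
    delta p k j = (Nat.factorial k : ℝ) * (Ppoly p j).coeff k := by
  have h : Fpoly p j = fun x => (Ppoly p j).eval x := by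
    funext x; rw [Ppoly_eval]
  rw [delta, h, iteratedDeriv_polyeval]
  show Polynomial.eval 0 _ = _
  rw [← Polynomial.coeff_zero_eq_eval_zero, Polynomial.coeff_iterate_derivative]
  simp [Nat.descFactorial_self, nsmul_eq_mul]

lemma coeff_comp_neg_X (Q : ℝ[X]) (n : ℕ) :
    (Q.comp (-Polynomial.X)).coeff n = (-1)^n * Q.coeff n := by
  induction Q using Polynomial.induction_on' with
  | add r s hr hs => simp [add_comp, hr, hs, mul_add]
  | monomial k a =>
    rw [monomial_comp,
      show (-Polynomial.X : ℝ[X]) = Polynomial.C (-1) * Polynomial.X by simp,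
      mul_pow, ← C_pow, ← mul_assoc, mul_comm (Polynomial.C a) _, mul_assoc,
      C_mul_X_pow_eq_monomial, coeff_C_mul, coeff_monomial]
    by_cases h : k = n <;> simp [h]

lemma Fpoly_neg (p : ℕ) (j : ℤ) (x : ℝ) : Fpoly p j (-x) = Fpoly p (-j) x := by
  unfold Fpoly
  refine Finset.prod_nbij' (fun r => -r) (fun r => -r) ?_ ?_ ?_ ?_ ?_
  · intro a ha
    simp only [Finset.mem_erase, Finset.mem_Icc] at ha ⊢
    omega
  · intro a ha
    simp only [Finset.mem_erase, Finset.mem_Icc] at ha ⊢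
    omega
  · intro a _; ring
  · intro a _; ring
  · intro a ha
    push_cast
    rw [show -x - (a:ℝ) = -(x + a) by ring, show (j:ℝ) - a = -((a:ℝ) - j) by ring,
      neg_div_neg_eq, show x - -(a:ℝ) = x + a by ring, show -(j:ℝ) - -(a:ℝ) = (a:ℝ) - j by ring]

/-- ∑_{k=1}^{p} φ_{2k} c^{2k}/(2k)! = ∑_{j=-p}^{p} F_{p,j}(c) j^{2p+2},
where φ_{2k} = ∑_j δ^{2k}_{p,j} j^{2p+2}; the right-hand side is r(c), the
polynomial of degree ≤ 2p interpolating the points (j, j^{2p+2}), j = -p, …, p. -/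
theorem even_error_coefficient_sum (p : ℕ) (hp : 1 ≤ p) (c : ℝ) :
    ∑ k ∈ Finset.Icc 1 p,
        (∑ j ∈ Finset.Icc (-(p:ℤ)) (p:ℤ), delta p (2*k) j * (j:ℝ)^(2*p+2))
          * c^(2*k) / (Nat.factorial (2*k) : ℝ)
      = ∑ j ∈ Finset.Icc (-(p:ℤ)) (p:ℤ), Fpoly p j c * (j:ℝ)^(2*p+2) := by
  set Q : ℝ[X] := ∑ j ∈ Finset.Icc (-(p:ℤ)) (p:ℤ), ((j:ℝ)^(2*p+2)) • Ppoly p j with hQ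
  have Qeval : ∀ x : ℝ, Q.eval x
      = ∑ j ∈ Finset.Icc (-(p:ℤ)) (p:ℤ), Fpoly p j x * (j:ℝ)^(2*p+2) := by
    intro x
    rw [hQ, Polynomial.eval_finset_sum]
    exact Finset.sum_congr rfl fun j _ => by
      rw [Polynomial.eval_smul, smul_eq_mul, Ppoly_eval, mul_comm]
  have Qcoeff : ∀ n : ℕ, Q.coeff n
      = ∑ j ∈ Finset.Icc (-(p:ℤ)) (p:ℤ), (j:ℝ)^(2*p+2) * (Ppoly p j).coeff n := by
    intro n
    rw [hQ, Polynomial.finset_sum_coeff]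
    exact Finset.sum_congr rfl fun j _ => by rw [Polynomial.coeff_smul, smul_eq_mul]
  -- evenness
  have Qeven : ∀ x : ℝ, Q.eval (-x) = Q.eval x := by
    intro x
    rw [Qeval, Qeval]
    rw [show (∑ j ∈ Finset.Icc (-(p:ℤ)) (p:ℤ), Fpoly p j (-x) * (j:ℝ)^(2*p+2))
        = ∑ j ∈ Finset.Icc (-(p:ℤ)) (p:ℤ), Fpoly p (-j) x * (j:ℝ)^(2*p+2) from
      Finset.sum_congr rfl fun j _ => by rw [Fpoly_neg]]
    refine Finset.sum_nbij' (fun j => -j) (fun j => -j) ?_ ?_ ?_ ?_ ?_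
    · intro a ha; simp only [Finset.mem_Icc] at ha ⊢; omega
    · intro a ha; simp only [Finset.mem_Icc] at ha ⊢; omega
    · intro a _; ring
    · intro a _; ring
    · intro a _
      congr 1
      push_cast
      rw [Even.neg_pow (⟨p+1, by ring⟩ : Even (2*p+2))]
  have Qcomp : Q.comp (-Polynomial.X) = Q := by
    apply Polynomial.funext
    intro x
    rw [Polynomial.eval_comp]
    simp only [Polynomial.eval_neg, Polynomial.eval_X]
    exact Qeven x
  have Qodd : ∀ n : ℕ, Odd n → Q.coeff n = 0 := by
    intro n hn
    have h := coeff_comp_neg_X Q n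
    rw [Qcomp, hn.neg_one_pow, neg_one_mul] at h
    linarith
  have Qzero : Q.coeff 0 = 0 := by
    rw [Polynomial.coeff_zero_eq_eval_zero, Qeval]
    apply Finset.sum_eq_zero
    intro j hj
    by_cases h : j = 0
    · subst h; simp
    · have : Fpoly p j 0 = 0 := by
        unfold Fpoly
        apply Finset.prod_eq_zero (i := (0:ℤ))
        · simp only [Finset.mem_erase, Finset.mem_Icc]
          refine ⟨Ne.symm h, by omega, by omega⟩
        · simp
      rw [this, zero_mul]
  have Qdeg : Q.natDegree ≤ 2*p := by
    apply Polynomial.natDegree_sum_le_of_forall_le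
    intro j hj
    refine (Polynomial.natDegree_smul_le _ _).trans ?_
    refine (Polynomial.natDegree_prod_le _ _).trans ?_
    have hcard : ((Finset.Icc (-(p:ℤ)) (p:ℤ)).erase j).card = 2*p := by
      rw [Finset.card_erase_of_mem hj, Int.card_Icc]
      simp only [Finset.mem_Icc] at hj
      omega
    calc ∑ r ∈ (Finset.Icc (-(p:ℤ)) (p:ℤ)).erase j,
          (Polynomial.C (((j:ℝ) - (r:ℝ))⁻¹) * (Polynomial.X - Polynomial.C (r:ℝ))).natDegree
        ≤ ∑ r ∈ (Finset.Icc (-(p:ℤ)) (p:ℤ)).erase j, 1 := by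
          refine Finset.sum_le_sum fun r _ => ?_
          refine (Polynomial.natDegree_mul_le).trans ?_
          rw [Polynomial.natDegree_C, Polynomial.natDegree_X_sub_C]
      _ = 2*p := by rw [Finset.sum_const, smul_eq_mul, mul_one, hcard]
  -- RHS as sum of even coefficients
  have hRHS : (∑ j ∈ Finset.Icc (-(p:ℤ)) (p:ℤ), Fpoly p j c * (j:ℝ)^(2*p+2))
      = ∑ k ∈ Finset.Icc 1 p, Q.coeff (2*k) * c^(2*k) := by
    rw [← Qeval, Polynomial.eval_eq_sum_range' (n := 2*p+1) (by omega : Q.natDegree < 2*p+1)]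
    rw [show ∑ k ∈ Finset.Icc 1 p, Q.coeff (2*k) * c^(2*k)
        = ∑ n ∈ (Finset.Icc 1 p).image (fun k => 2*k), Q.coeff n * c^n from
      (Finset.sum_image (f := fun n => Q.coeff n * c ^ n) (g := fun k => 2*k) (fun a _ b _ h => Nat.eq_of_mul_eq_mul_left two_pos h)).symm]
    symm
    apply Finset.sum_subset
    · intro n hn
      simp only [Finset.mem_image, Finset.mem_Icc] at hn
      obtain ⟨k, ⟨hk1, hk2⟩, rfl⟩ := hn
      simp only [Finset.mem_range]
      omega
    · intro n hn hn'
      rcases Nat.even_or_odd n with he | ho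
      · obtain ⟨m, rfl⟩ := he
        simp only [Finset.mem_range, Finset.mem_image, Finset.mem_Icc] at hn hn'
        have hm : m = 0 := by
          by_contra hm0
          exact hn' ⟨m, ⟨by omega, by omega⟩, by omega⟩
        subst hm
        simpa using Qzero
      · rw [Qodd n ho, zero_mul]
  rw [hRHS]
  apply Finset.sum_congr rfl
  intro k hk
  have hsum : (∑ j ∈ Finset.Icc (-(p:ℤ)) (p:ℤ), delta p (2*k) j * (j:ℝ)^(2*p+2))
      = (Nat.factorial (2*k) : ℝ) * Q.coeff (2*k) := by
    rw [Qcoeff, Finset.mul_sum]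
    apply Finset.sum_congr rfl
    intro j _
    rw [delta_eq]
    ring
  rw [hsum]
  have hfac : (Nat.factorial (2*k) : ℝ) ≠ 0 := Nat.cast_ne_zero.mpr (Nat.factorial_ne_zero _)
  field_simp
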